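/- arXiv:2411.09696 — 7 statements merged into one kernel-verified Lean document; each statement's English description precedes it below -/
import Mathlib

section
/- Let μ be a probability Borel measure on (0,∞) with ∫ λ dμ(λ) ≤ 1 and ∫ λ^r dμ > 0 for r ∈ (0,1]. Define S_α = (1/(α−1)) log ∫ λ^{1−α} dμ(λ) for α ∈ (0,1). Then S_α ≥ 0 for all α ∈ (0,1) and α ↦ S_α is monotonically increasing on (0,1). -/
/-!
Writing `I r = ∫ λ^r dμ`, Jensen's inequality for the concave map `x ↦ x^(t/s)` gives
Lyapunov's inequality `I t ≤ (I s)^(t/s)` for `0 < t ≤ s ≤ 1`, i.e. `r ↦ r⁻¹ log I r` is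
monotone on `(0, 1]`. Since `S_α = -(1-α)⁻¹ log I (1-α)`, this is the monotonicity of `S_α`,
and comparing with `r = 1`, where `log I 1 = log ∫ λ dμ ≤ 0`, gives `S_α ≥ 0`.
-/

open MeasureTheory

section

variable {Ω : Type*} [MeasurableSpace Ω] {μ : Measure Ω} {f : Ω → ℝ}

theorem MeasureTheory.Integrable.rpow_of_le_one [IsFiniteMeasure μ] (hf : Integrable f μ)
    (hf0 : 0 ≤ᵐ[μ] f) {r : ℝ} (hr0 : 0 ≤ r) (hr1 : r ≤ 1) :
    Integrable (fun x => f x ^ r) μ := by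
  have hnorm : MemLp (fun x => ‖f x‖ ^ (ENNReal.ofReal r).toReal) (1 / ENNReal.ofReal r) μ :=
    (memLp_one_iff_integrable.2 hf).norm_rpow_div _
  have hexp : (1 : ENNReal) ≤ 1 / ENNReal.ofReal r := by
    rw [one_div, ENNReal.one_le_inv]
    exact ENNReal.ofReal_le_one.2 hr1
  refine (memLp_one_iff_integrable.1 (hnorm.mono_exponent hexp)).congr ?_
  filter_upwards [hf0] with x hx
  rw [ENNReal.toReal_ofReal hr0, Real.norm_of_nonneg hx]

theorem integral_rpow_le_rpow_integral [IsProbabilityMeasure μ] (hf : Integrable f μ)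
    (hf0 : 0 ≤ᵐ[μ] f) {p : ℝ} (hp0 : 0 ≤ p) (hp1 : p ≤ 1) :
    ∫ x, f x ^ p ∂μ ≤ (∫ x, f x ∂μ) ^ p :=
  (Real.concaveOn_rpow hp0 hp1).le_map_integral (Real.continuous_rpow_const hp0).continuousOn
    isClosed_Ici hf0 hf (hf.rpow_of_le_one hf0 hp0 hp1)

theorem integral_rpow_le_integral_rpow_rpow_div [IsProbabilityMeasure μ] (hf0 : 0 ≤ᵐ[μ] f)
    {t s : ℝ} (hs : Integrable (fun x => f x ^ s) μ) (ht : 0 < t) (hts : t ≤ s) :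
    ∫ x, f x ^ t ∂μ ≤ (∫ x, f x ^ s ∂μ) ^ (t / s) := by
  have hs0 : 0 < s := ht.trans_le hts
  have hfs0 : 0 ≤ᵐ[μ] fun x => f x ^ s := by
    filter_upwards [hf0] with x hx using Real.rpow_nonneg hx s
  have hpow : (fun x => (f x ^ s) ^ (t / s)) =ᵐ[μ] fun x => f x ^ t := by
    filter_upwards [hf0] with x hx
    rw [← Real.rpow_mul hx, mul_div_cancel₀ t hs0.ne']
  rw [← integral_congr_ae hpow]
  exact integral_rpow_le_rpow_integral hs hfs0 (div_pos ht hs0).le ((div_le_one hs0).2 hts)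

theorem inv_mul_log_integral_rpow_le [IsProbabilityMeasure μ] (hf0 : 0 ≤ᵐ[μ] f)
    {t s : ℝ} (hs : Integrable (fun x => f x ^ s) μ) (ht : 0 < t) (hts : t ≤ s)
    (hIt : 0 < ∫ x, f x ^ t ∂μ) (hIs : 0 < ∫ x, f x ^ s ∂μ) :
    t⁻¹ * Real.log (∫ x, f x ^ t ∂μ) ≤ s⁻¹ * Real.log (∫ x, f x ^ s ∂μ) := by
  have hlog : Real.log (∫ x, f x ^ t ∂μ) ≤ t / s * Real.log (∫ x, f x ^ s ∂μ) := by
    rw [← Real.log_rpow hIs]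
    exact Real.log_le_log hIt (integral_rpow_le_integral_rpow_rpow_div hf0 hs ht hts)
  calc t⁻¹ * Real.log (∫ x, f x ^ t ∂μ)
      ≤ t⁻¹ * (t / s * Real.log (∫ x, f x ^ s ∂μ)) := by gcongr
    _ = s⁻¹ * Real.log (∫ x, f x ^ s ∂μ) := by field_simp

end

/-- Non-negativity and monotonicity of the Petz–Rényi relative entropy
`S_α = (α-1)⁻¹ log ∫ λ^{1-α} dμ` for a probability measure `μ` on `(0,∞)`
with `∫ λ dμ ≤ 1`. -/
theorem petz_renyi_nonneg_monotone (μ : Measure ℝ) [IsProbabilityMeasure μ]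
    (hpos : ∀ᵐ l ∂μ, 0 < l) (hlam : Integrable (fun l => l) μ)
    (hle : ∫ l, l ∂μ ≤ 1)
    (hposint : ∀ r ∈ Set.Ioc (0 : ℝ) 1, 0 < ∫ l, l ^ r ∂μ) :
    (∀ α ∈ Set.Ioo (0 : ℝ) 1,
      0 ≤ (α - 1)⁻¹ * Real.log (∫ l, l ^ (1 - α) ∂μ)) ∧
    (∀ α ∈ Set.Ioo (0 : ℝ) 1, ∀ β ∈ Set.Ioo (0 : ℝ) 1, α ≤ β →
      (α - 1)⁻¹ * Real.log (∫ l, l ^ (1 - α) ∂μ)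
        ≤ (β - 1)⁻¹ * Real.log (∫ l, l ^ (1 - β) ∂μ)) := by
  have hnonneg : 0 ≤ᵐ[μ] fun l : ℝ => l := by
    filter_upwards [hpos] with l hl using hl.le
  have slope_le {t s : ℝ} (ht : 0 < t) (hts : t ≤ s) (hs1 : s ≤ 1) :
      t⁻¹ * Real.log (∫ l, l ^ t ∂μ) ≤ s⁻¹ * Real.log (∫ l, l ^ s ∂μ) :=
    inv_mul_log_integral_rpow_le hnonneg (hlam.rpow_of_le_one hnonneg (ht.le.trans hts) hs1) ht hts
      (hposint t ⟨ht, hts.trans hs1⟩) (hposint s ⟨ht.trans_le hts, hs1⟩)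
  have renyi_eq (α : ℝ) : (α - 1)⁻¹ * Real.log (∫ l, l ^ (1 - α) ∂μ)
      = -((1 - α)⁻¹ * Real.log (∫ l, l ^ (1 - α) ∂μ)) := by
    rw [← neg_sub 1 α, inv_neg, neg_mul]
  refine ⟨fun α hα => ?_, fun α hα β hβ hαβ => ?_⟩
  · have hlog_one : Real.log (∫ l, l ^ (1 : ℝ) ∂μ) ≤ 0 := by
      simp only [Real.rpow_one]
      exact Real.log_nonpos (integral_nonneg_of_ae hnonneg) hle
    have hslope := slope_le (sub_pos.2 hα.2) (sub_le_self 1 hα.1.le) le_rfl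
    rw [inv_one, one_mul] at hslope
    rw [renyi_eq]
    linarith
  · have hslope := slope_le (sub_pos.2 hβ.2) (sub_le_sub_left hαβ 1) (sub_le_self 1 hα.1.le)
    rw [renyi_eq, renyi_eq]
    linarith
end

section
/- Let μ be a probability Borel measure on (0,∞) with ∫ λ dμ < ∞ and ∫ |log λ| dμ < ∞. Then lim_{α→1⁻} (1/(α−1)) log ∫ λ^{1−α} dμ(λ) = −∫ log λ dμ(λ). -/
/-!
With `F t = ∫ λ ^ t dμ` we have `F 0 = 1`, and the limit is the left derivative at `α = 1` of
`α ↦ log F (1 - α)`, i.e. `-F'(0⁺) / F 0`. Convexity of `t ↦ λ ^ t` traps the difference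
quotients `(λ ^ t - 1) / t`, `0 < t ≤ 1`, between `log λ` and `λ - 1`, so dominated convergence
gives `F'(0⁺) = ∫ log λ dμ`.
-/

open MeasureTheory Real Filter Set Topology

namespace Real

lemma rpow_le_one_add_mul_sub_one {a t : ℝ} (ha : 0 ≤ a) (ht₀ : 0 ≤ t) (ht₁ : t ≤ 1) :
    a ^ t ≤ 1 + t * (a - 1) := by
  simpa using rpow_one_add_le_one_add_mul_self (s := a - 1) (by linarith) ht₀ ht₁

lemma abs_slope_rpow_zero_le {a t : ℝ} (ha : 0 < a) (ht₀ : 0 < t) (ht₁ : t ≤ 1) :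
    |slope (fun s : ℝ => a ^ s) 0 t| ≤ |log a| + |a - 1| := by
  have hslope : slope (fun s : ℝ => a ^ s) 0 t = (a ^ t - 1) / t := by
    rw [slope_def_field, rpow_zero, sub_zero]
  have hlower : log a ≤ (a ^ t - 1) / t := by
    rw [le_div_iff₀ ht₀, rpow_def_of_pos ha]
    linarith [add_one_le_exp (log a * t)]
  have hupper : (a ^ t - 1) / t ≤ a - 1 := by
    rw [div_le_iff₀ ht₀]
    linarith [rpow_le_one_add_mul_sub_one ha.le ht₀.le ht₁]
  rw [hslope, abs_le]
  constructor <;> linarith [neg_abs_le (log a), le_abs_self (a - 1), abs_nonneg (log a),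
    abs_nonneg (a - 1)]

lemma tendsto_slope_rpow_zero {a : ℝ} (ha : 0 < a) :
    Tendsto (slope (fun s : ℝ => a ^ s) 0) (𝓝[>] 0) (𝓝 (log a)) := by
  have h := (hasStrictDerivAt_const_rpow ha 0).hasDerivAt.hasDerivWithinAt (s := Ioi 0)
  rwa [rpow_zero, one_mul, hasDerivWithinAt_iff_tendsto_slope' self_notMem_Ioi] at h

end Real

lemma integrable_rpow_of_integrable_id {μ : Measure ℝ} [IsFiniteMeasure μ]
    (hnonneg : ∀ᵐ l ∂μ, 0 ≤ l) (hlam : Integrable (fun l => l) μ) {t : ℝ} (ht₀ : 0 ≤ t)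
    (ht₁ : t ≤ 1) : Integrable (fun l => l ^ t) μ := by
  refine ((integrable_const 1).add hlam).mono' (by fun_prop) ?_
  filter_upwards [hnonneg] with a ha
  rw [norm_of_nonneg (rpow_nonneg ha t), Pi.add_apply]
  nlinarith [rpow_le_one_add_mul_sub_one ha ht₀ ht₁]

lemma hasDerivWithinAt_integral_rpow_zero {μ : Measure ℝ} [IsFiniteMeasure μ]
    (hpos : ∀ᵐ l ∂μ, 0 < l) (hlam : Integrable (fun l => l) μ)
    (hlog : Integrable (fun l => |log l|) μ) :
    HasDerivWithinAt (fun t : ℝ => ∫ l, l ^ t ∂μ) (∫ l, log l ∂μ) (Ioi 0) 0 := by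
  have hslope : ∀ t ∈ Ioc (0 : ℝ) 1,
      ∫ l, slope (fun s : ℝ => l ^ s) 0 t ∂μ = slope (fun t : ℝ => ∫ l, l ^ t ∂μ) 0 t := by
    intro t ht
    have hint := integrable_rpow_of_integrable_id (hpos.mono fun _ h => h.le) hlam ht.1.le ht.2
    simp only [slope_def_field, rpow_zero]
    rw [integral_div, integral_sub hint (integrable_const 1)]
  rw [hasDerivWithinAt_iff_tendsto_slope' self_notMem_Ioi]
  refine Tendsto.congr' (eventuallyEq_of_mem (Ioc_mem_nhdsGT zero_lt_one) hslope) ?_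
  refine tendsto_integral_filter_of_dominated_convergence (fun l => |log l| + |l - 1|)
    (Eventually.of_forall fun t => by simp only [slope_def_field]; fun_prop) ?_
    (hlog.add (hlam.sub (integrable_const 1)).abs) ?_
  · filter_upwards [Ioc_mem_nhdsGT zero_lt_one] with t ht
    filter_upwards [hpos] with a ha
    exact abs_slope_rpow_zero_le ha ht.1 ht.2
  · filter_upwards [hpos] with a ha
    exact tendsto_slope_rpow_zero ha

/-- The Petz–Rényi relative entropy converges to the Araki–Uhlmann relative entropy:
`lim_{α→1⁻} (α-1)⁻¹ log ∫ λ^{1-α} dμ = -∫ log λ dμ`. -/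
theorem petz_renyi_tendsto_relative_entropy (μ : Measure ℝ) [IsProbabilityMeasure μ]
    (hpos : ∀ᵐ l ∂μ, 0 < l) (hlam : Integrable (fun l => l) μ)
    (hlog : Integrable (fun l => |Real.log l|) μ) :
    Filter.Tendsto (fun α : ℝ => (α - 1)⁻¹ * Real.log (∫ l, l ^ (1 - α) ∂μ))
      (nhdsWithin 1 (Set.Iio 1)) (nhds (- ∫ l, Real.log l ∂μ)) := by
  have hF := hasDerivWithinAt_integral_rpow_zero hpos hlam hlog
  have hreflect : HasDerivWithinAt (fun α : ℝ => 1 - α) (-1) (Iio 1) 1 :=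
    ((hasDerivAt_id 1).const_sub 1).hasDerivWithinAt
  have hG := (hF.comp_of_eq 1 hreflect (fun α (hα : α < 1) => sub_pos.2 hα)
    (sub_self 1).symm).log (by simp)
  rw [hasDerivWithinAt_iff_tendsto_slope' self_notMem_Iio] at hG
  convert hG using 2 with α
  · simp [slope_def_field, div_eq_inv_mul]
  · simp
end

section
/- Let H be a Hilbert space, 𝔄 a von Neumann algebra on H, Ω a cyclic and separating vector for 𝔄, and U, V ∈ 𝔄 and U', V' ∈ 𝔄' all invertible. Set Ψ = U U' Ω and Φ = V V' Ω, assumed cyclic and separating. Then the relative Tomita operator satisfies S_{Ψ|Φ} = (U^{-1})† V' S_Ω (U')^{-1} V† on the dense domain 𝔄 Ψ, where S_Ω is the Tomita operator of (𝔄, Ω). -/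
open ContinuousLinearMap

/-- For `Ψ = U U' Ω` and `Φ = V V' Ω` with invertible `U, V ∈ 𝔄` and invertible
`U', V' ∈ 𝔄'`, the relative Tomita operator satisfies
`S_{Ψ|Φ} = (U⁻¹)† V' S_Ω (U')⁻¹ V†` on the dense domain `𝔄 Ψ`. -/
theorem relative_tomita_formula {H : Type*} [NormedAddCommGroup H]
    [InnerProductSpace ℂ H] [CompleteSpace H]
    (A : VonNeumannAlgebra H) (Ω Ψ Φ : H)
    (U V Uinv Vinv : H →L[ℂ] H)
    (hU : U ∈ A) (hV : V ∈ A) (hUinvA : Uinv ∈ A) (hVinvA : Vinv ∈ A)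
    (hUinv₁ : U * Uinv = 1) (hUinv₂ : Uinv * U = 1)
    (hVinv₁ : V * Vinv = 1) (hVinv₂ : Vinv * V = 1)
    (U' V' U'inv V'inv : H →L[ℂ] H)
    (hU' : U' ∈ A.commutant) (hV' : V' ∈ A.commutant)
    (hU'invA : U'inv ∈ A.commutant) (hV'invA : V'inv ∈ A.commutant)
    (hU'inv₁ : U' * U'inv = 1) (hU'inv₂ : U'inv * U' = 1)
    (hV'inv₁ : V' * V'inv = 1) (hV'inv₂ : V'inv * V' = 1)
    (hΨ : Ψ = U (U' Ω)) (hΦ : Φ = V (V' Ω))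
    -- Ω, Ψ and Φ are cyclic and separating for A:
    (hcycΩ : Dense {x : H | ∃ a ∈ A, a Ω = x})
    (hsepΩ : ∀ a ∈ A, a Ω = 0 → a = 0)
    (hcycΨ : Dense {x : H | ∃ a ∈ A, a Ψ = x})
    (hsepΨ : ∀ a ∈ A, a Ψ = 0 → a = 0)
    (hcycΦ : Dense {x : H | ∃ a ∈ A, a Φ = x})
    (hsepΦ : ∀ a ∈ A, a Φ = 0 → a = 0)
    -- the Tomita operator of (A, Ω) and the relative Tomita operator:
    (SΩ Srel : H → H)
    (hSΩ : ∀ a ∈ A, SΩ (a Ω) = (star a) Ω)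
    (hSrel : ∀ a ∈ A, Srel (a Ψ) = (star a) Φ) :
    ∀ a ∈ A, Srel (a Ψ) = (star Uinv) (V' (SΩ (U'inv ((star V) (a Ψ))))) := by
  intro a ha
  have hb : (star V * a * U) ∈ A := A.mul_mem (A.mul_mem (A.star_mem' hV) ha) hU
  -- Step 1: U'inv (star V (a Ψ)) = (star V * a * U) Ω
  have h1 : U'inv ((star V) (a Ψ)) = (star V * a * U) Ω := by
    have hc : (star V * a * U) * U'inv = U'inv * (star V * a * U) :=
      (VonNeumannAlgebra.mem_commutant_iff.mp hU'invA) _ hb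
    have : (U'inv * (star V * a * U)) (U' Ω) = ((star V * a * U) * U'inv) (U' Ω) := by
      rw [hc]
    calc U'inv ((star V) (a Ψ)) = (U'inv * (star V * a * U)) (U' Ω) := by
          simp [hΨ, mul_apply]
      _ = ((star V * a * U) * U'inv) (U' Ω) := this
      _ = (star V * a * U) ((U'inv * U') Ω) := by simp [mul_apply]
      _ = (star V * a * U) Ω := by rw [hU'inv₂]; simp
  -- Step 2: apply SΩ
  have h2 : SΩ (U'inv ((star V) (a Ψ))) = (star U * star a * V) Ω := by
    rw [h1, hSΩ _ hb]
    simp [star_mul, mul_assoc]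
  -- Step 3: apply V'
  have hb2 : (star U * star a * V) ∈ A :=
    A.mul_mem (A.mul_mem (A.star_mem' hU) (A.star_mem' ha)) hV
  have h3 : V' (SΩ (U'inv ((star V) (a Ψ)))) = (star U) ((star a) Φ) := by
    have hc : (star U * star a * V) * V' = V' * (star U * star a * V) :=
      (VonNeumannAlgebra.mem_commutant_iff.mp hV') _ hb2
    have : (V' * (star U * star a * V)) Ω = ((star U * star a * V) * V') Ω := by rw [hc]
    calc V' (SΩ (U'inv ((star V) (a Ψ)))) = (V' * (star U * star a * V)) Ω := by
          rw [h2]; simp [mul_apply]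
      _ = ((star U * star a * V) * V') Ω := this
      _ = (star U) ((star a) Φ) := by simp [hΦ, mul_apply]
  -- Step 4: apply star Uinv
  rw [h3, hSrel _ ha]
  have : (star Uinv * star U) ((star a) Φ) = (star a) Φ := by
    rw [← star_mul, hUinv₁]; simp
  simpa [mul_apply] using this.symm
end

section
/- Under the hypotheses of the previous statement with U, U', V, V' unitary, the relative modular operator satisfies Δ_{Ψ|Φ} = V U' Δ_Ω (U')† V†, and consequently Δ_{Ψ|Φ}^r = V U' Δ_Ω^r (U')† V† for all r ≥ 0. -/
/-!
On the dense set `𝔄 Ψ` the relative Tomita operator factors as `S_{Ψ|Φ} = (U V') S_Ω (V U')†`: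
since `𝔄` and `𝔄'` commute, `(V U')† a Ψ = (V† a U) Ω` and `U V' (V† a U)† Ω = a† Φ`.
As `U V'` is unitary, the quadratic forms of `Δ_{Ψ|Φ}` and of `(V U') Δ_Ω (V U')†` agree on that
dense set, so the two bounded operators coincide. Conjugation by a unitary is a continuous
star-algebra automorphism, hence commutes with the continuous functional calculus.
-/

open scoped InnerProductSpace

theorem cfc_unitary_conj {A : Type*} [CStarAlgebra A] (u : unitary A) (f : ℝ → ℝ) (a : A)
    (hf : ContinuousOn f (spectrum ℝ a) := by cfc_cont_tac) (ha : IsSelfAdjoint a := by cfc_tac) :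
    cfc f ((u : A) * a * star (u : A)) = u * cfc f a * star (u : A) :=
  ((Unitary.conjStarAlgAut ℂ A u : A →⋆ₐ[ℂ] A).map_cfc f a hf
    (by change Continuous fun x : A => (u : A) * x * star (u : A); fun_prop) ha
    (ha.conjugate _)).symm

section InnerProduct

variable {𝕜 H : Type*} [RCLike 𝕜] [NormedAddCommGroup H] [InnerProductSpace 𝕜 H]

theorem ContinuousLinearMap.ext_inner_of_dense {D : Set H} (hD : Dense D) {T T' : H →L[𝕜] H}
    (h : ∀ η ∈ D, ∀ ξ ∈ D, ⟪T η, ξ⟫_𝕜 = ⟪T' η, ξ⟫_𝕜) : T = T' :=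
  DFunLike.coe_injective <| Continuous.ext_on hD T.continuous T'.continuous fun η hη =>
    hD.eq_of_inner_left 𝕜 (h η hη)

theorem ContinuousLinearMap.isSelfAdjoint_of_inner_eq_inner_map [CompleteSpace H]
    {T : H →L[𝕜] H} (S : H → H)
    (h : ∀ ξ η, ⟪T η, ξ⟫_𝕜 = ⟪S ξ, S η⟫_𝕜) : IsSelfAdjoint T := by
  rw [ContinuousLinearMap.isSelfAdjoint_iff_isSymmetric]
  intro x y
  change ⟪T x, y⟫_𝕜 = ⟪x, T y⟫_𝕜
  rw [h, ← inner_conj_symm, ← h, inner_conj_symm]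

theorem ContinuousLinearMap.eq_star_mul_mul_of_factor_on_dense [CompleteSpace H]
    {S S' : H → H} {Δ Δ' : H →L[𝕜] H}
    (hΔ : ∀ ξ η, ⟪Δ η, ξ⟫_𝕜 = ⟪S ξ, S η⟫_𝕜) (hΔ' : ∀ ξ η, ⟪Δ' η, ξ⟫_𝕜 = ⟪S' ξ, S' η⟫_𝕜)
    {X : H →L[𝕜] H} (hX : X ∈ unitary (H →L[𝕜] H)) (Y : H →L[𝕜] H) {D : Set H} (hD : Dense D)
    (hS' : ∀ ξ ∈ D, S' ξ = X (S (Y ξ))) : Δ' = star Y * Δ * Y := by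
  refine ext_inner_of_dense hD fun η hη ξ hξ => ?_
  rw [hΔ', hS' ξ hξ, hS' η hη, inner_map_map_of_mem_unitary hX, ← hΔ, star_eq_adjoint,
    mul_apply_eq_comp, mul_apply_eq_comp, adjoint_inner_left]

end InnerProduct

namespace VonNeumannAlgebra

variable {H : Type*} [NormedAddCommGroup H] [InnerProductSpace ℂ H] [CompleteSpace H]
  {A : VonNeumannAlgebra H}

theorem commutant_apply_comm {z a : H →L[ℂ] H} (hz : z ∈ A.commutant) (ha : a ∈ A) (x : H) :
    z (a x) = a (z x) :=
  congrArg (· x) (mem_commutant_iff.mp hz a ha).symm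

theorem star_mul_apply_eq_apply_of_mem_commutant {U V U' a : H →L[ℂ] H} (hU : U ∈ A) (hV : V ∈ A)
    (hU' : U' ∈ A.commutant) (hU'u : U' ∈ unitary (H →L[ℂ] H)) (ha : a ∈ A) (Ω : H) :
    star (V * U') (a (U (U' Ω))) = (star V * a * U) Ω := by
  have hb : star V * a * U ∈ A := mul_mem (mul_mem (star_mem hV) ha) hU
  calc star (V * U') (a (U (U' Ω))) = star U' ((star V * a * U) (U' Ω)) := by
        simp [star_mul]
    _ = (star V * a * U) (star U' (U' Ω)) := commutant_apply_comm (star_mem hU') hb _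
    _ = (star V * a * U) Ω := by
        rw [← mul_apply_eq_comp (star U'), Unitary.star_mul_self_of_mem hU'u, one_apply_eq_self]

theorem apply_star_apply_of_mem_commutant {U V V' a : H →L[ℂ] H} (hU : U ∈ A) (hV : V ∈ A)
    (hUu : U ∈ unitary (H →L[ℂ] H)) (hV' : V' ∈ A.commutant) (ha : a ∈ A) (Ω : H) :
    U (V' (star (star V * a * U) Ω)) = star a (V (V' Ω)) := by
  have hb : star U * star a * V ∈ A := mul_mem (mul_mem (star_mem hU) (star_mem ha)) hV
  calc U (V' (star (star V * a * U) Ω)) = U (V' ((star U * star a * V) Ω)) := by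
        simp [star_mul, mul_assoc]
    _ = (U * star U) ((star a * V) (V' Ω)) := by
        rw [commutant_apply_comm hV' hb]; simp
    _ = star a (V (V' Ω)) := by
        rw [Unitary.mul_star_self_of_mem hUu]; simp

end VonNeumannAlgebra

theorem relative_modular_operator_formula_general {H : Type*} [NormedAddCommGroup H]
    [InnerProductSpace ℂ H] [CompleteSpace H]
    (A : VonNeumannAlgebra H) (Ω Ψ Φ : H)
    (U V U' V' : H →L[ℂ] H)
    (hU : U ∈ A) (hV : V ∈ A) (hU' : U' ∈ A.commutant) (hV' : V' ∈ A.commutant)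
    (hUu : U ∈ unitary (H →L[ℂ] H)) (hVu : V ∈ unitary (H →L[ℂ] H))
    (hU'u : U' ∈ unitary (H →L[ℂ] H)) (hV'u : V' ∈ unitary (H →L[ℂ] H))
    (hΨ : Ψ = U (U' Ω)) (hΦ : Φ = V (V' Ω))
    (hcycΨ : Dense {x : H | ∃ a ∈ A, a Ψ = x})
    -- Tomita operators (antilinear, continuous for simplicity of the model):
    (SΩ Srel : H → H)
    (hSΩ : ∀ a ∈ A, SΩ (a Ω) = (star a) Ω)
    (hSrel : ∀ a ∈ A, Srel (a Ψ) = (star a) Φ)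
    -- modular operators `Δ = S† S`, characterized by `⟪Δ η, ξ⟫ = ⟪S ξ, S η⟫`:
    (ΔΩ Δrel : H →L[ℂ] H)
    (hΔΩ : ∀ ξ η : H, (inner ℂ (ΔΩ η) ξ : ℂ) = inner ℂ (SΩ ξ) (SΩ η))
    (hΔrel : ∀ ξ η : H, (inner ℂ (Δrel η) ξ : ℂ) = inner ℂ (Srel ξ) (Srel η)) :
    Δrel = V * U' * ΔΩ * star U' * star V ∧
    ∀ r : ℝ, 0 ≤ r →
      cfc (fun x : ℝ => x ^ r) Δrel
        = V * U' * cfc (fun x : ℝ => x ^ r) ΔΩ * star U' * star V := by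
  have hSrel_eq : ∀ ξ ∈ {x : H | ∃ a ∈ A, a Ψ = x},
      Srel ξ = (U * V') (SΩ (star (V * U') ξ)) := by
    rintro _ ⟨a, ha, rfl⟩
    rw [hSrel a ha, hΨ, A.star_mul_apply_eq_apply_of_mem_commutant hU hV hU' hU'u ha,
      hSΩ _ (mul_mem (mul_mem (star_mem hV) ha) hU), mul_apply_eq_comp,
      A.apply_star_apply_of_mem_commutant hU hV hUu hV' ha, hΦ]
  have hΔrel_eq : Δrel = V * U' * ΔΩ * star (V * U') := by
    simpa using ContinuousLinearMap.eq_star_mul_mul_of_factor_on_dense hΔΩ hΔrel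
      (mul_mem hUu hV'u) (star (V * U')) hcycΨ hSrel_eq
  have hΔΩ_sa := ContinuousLinearMap.isSelfAdjoint_of_inner_eq_inner_map SΩ hΔΩ
  refine ⟨by rw [hΔrel_eq, star_mul, mul_assoc _ (star U')], fun r hr => ?_⟩
  rw [hΔrel_eq, cfc_unitary_conj ⟨V * U', mul_mem hVu hU'u⟩ _ ΔΩ
    (Real.continuous_rpow_const hr).continuousOn hΔΩ_sa]
  simp only [star_mul, mul_assoc]

/-- For unitary excitations `Ψ = U U' Ω`, `Φ = V V' Ω` with unitary `U, V ∈ 𝔄` and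
`U', V' ∈ 𝔄'`, the relative modular operator satisfies
`Δ_{Ψ|Φ} = V U' Δ_Ω (U')† V†`, and consequently
`Δ_{Ψ|Φ}^r = V U' Δ_Ω^r (U')† V†` for all `r ≥ 0` (spectral calculus). -/
theorem relative_modular_operator_formula {H : Type*} [NormedAddCommGroup H]
    [InnerProductSpace ℂ H] [CompleteSpace H]
    (A : VonNeumannAlgebra H) (Ω Ψ Φ : H)
    (U V U' V' : H →L[ℂ] H)
    (hU : U ∈ A) (hV : V ∈ A) (hU' : U' ∈ A.commutant) (hV' : V' ∈ A.commutant)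
    (hUu : U ∈ unitary (H →L[ℂ] H)) (hVu : V ∈ unitary (H →L[ℂ] H))
    (hU'u : U' ∈ unitary (H →L[ℂ] H)) (hV'u : V' ∈ unitary (H →L[ℂ] H))
    (hΨ : Ψ = U (U' Ω)) (hΦ : Φ = V (V' Ω))
    (hcycΩ : Dense {x : H | ∃ a ∈ A, a Ω = x})
    (hsepΩ : ∀ a ∈ A, a Ω = 0 → a = 0)
    (hcycΨ : Dense {x : H | ∃ a ∈ A, a Ψ = x})
    (hsepΨ : ∀ a ∈ A, a Ψ = 0 → a = 0)
    (hcycΦ : Dense {x : H | ∃ a ∈ A, a Φ = x})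
    (hsepΦ : ∀ a ∈ A, a Φ = 0 → a = 0)
    -- Tomita operators (antilinear, continuous for simplicity of the model):
    (SΩ Srel : H → H)
    (hSΩ : ∀ a ∈ A, SΩ (a Ω) = (star a) Ω)
    (hSrel : ∀ a ∈ A, Srel (a Ψ) = (star a) Φ)
    -- modular operators `Δ = S† S`, characterized by `⟪Δ η, ξ⟫ = ⟪S ξ, S η⟫`:
    (ΔΩ Δrel : H →L[ℂ] H)
    (hΔΩ : ∀ ξ η : H, (inner ℂ (ΔΩ η) ξ : ℂ) = inner ℂ (SΩ ξ) (SΩ η))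
    (hΔrel : ∀ ξ η : H, (inner ℂ (Δrel η) ξ : ℂ) = inner ℂ (Srel ξ) (Srel η)) :
    Δrel = V * U' * ΔΩ * star U' * star V ∧
    ∀ r : ℝ, 0 ≤ r →
      cfc (fun x : ℝ => x ^ r) Δrel
        = V * U' * cfc (fun x : ℝ => x ^ r) ΔΩ * star U' * star V :=
  relative_modular_operator_formula_general A Ω Ψ Φ U V U' V' hU hV hU' hV' hUu hVu hU'u hV'u hΨ hΦ
    hcycΨ SΩ Srel hSΩ hSrel ΔΩ Δrel hΔΩ hΔrel
end

section
/- Let H be a Hilbert space, 𝔄 a von Neumann algebra on H, and Ψ a cyclic and separating vector such that the state a ↦ ⟨Ψ, a Ψ⟩ is tracial on 𝔄 (i.e., ⟨Ψ, ab Ψ⟩ = ⟨Ψ, ba Ψ⟩ for all a, b ∈ 𝔄). Then the Tomita operator S_Ψ is antiunitary (‖S_Ψ ξ‖ = ‖ξ‖ for all ξ), and consequently the modular operator Δ_Ψ equals the identity. -/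
/-!
Traciality gives `‖a† Ψ‖² = ⟪Ψ, a a† Ψ⟫ = ⟪Ψ, a† a Ψ⟫ = ‖a Ψ‖²`, so `S` is isometric on the dense
set `𝔄 Ψ`, hence everywhere by continuity. Polarization turns an isometric conjugate-linear map
into one with `⟪S ξ, S η⟫ = ⟪η, ξ⟫`, and then `⟪Δ η, ξ⟫ = ⟪η, ξ⟫` for all `ξ, η` forces `Δ = 1`.
-/

theorem ContinuousLinearMap.norm_star_apply_eq_of_inner_commute {𝕜 E : Type*} [RCLike 𝕜]
    [NormedAddCommGroup E] [InnerProductSpace 𝕜 E] [CompleteSpace E] (a : E →L[𝕜] E) (Ψ : E)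
    (h : (inner 𝕜 Ψ ((a * star a) Ψ) : 𝕜) = inner 𝕜 Ψ ((star a * a) Ψ)) :
    ‖(star a) Ψ‖ = ‖a Ψ‖ := by
  refine (sq_eq_sq₀ (norm_nonneg _) (norm_nonneg _)).1 ?_
  rw [apply_norm_sq_eq_inner_adjoint_right, apply_norm_sq_eq_inner_adjoint_right,
    ← star_eq_adjoint, ← star_eq_adjoint, star_star]
  exact congrArg RCLike.re h

theorem LinearMap.inner_map_map_eq_inner_swap_of_norm_map {E F : Type*}
    [NormedAddCommGroup E] [InnerProductSpace ℂ E] [NormedAddCommGroup F] [InnerProductSpace ℂ F]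
    (S : E →ₗ⋆[ℂ] F) (hS : ∀ x, ‖S x‖ = ‖x‖) (x y : E) :
    (inner ℂ (S x) (S y) : ℂ) = inner ℂ y x := by
  have hI : ∀ x y : E, ‖x + Complex.I • y‖ = ‖y - Complex.I • x‖ := fun x y => by
    have : x + Complex.I • y = Complex.I • (y - Complex.I • x) := by
      rw [smul_sub, smul_smul, Complex.I_mul_I]; module
    rw [this, norm_smul, Complex.norm_I, one_mul]
  have h₁ : S x - Complex.I • S y = S (x + Complex.I • y) := by simp [sub_eq_add_neg]
  have h₂ : S x + Complex.I • S y = S (x - Complex.I • y) := by simp [sub_eq_add_neg]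
  rw [inner_eq_sum_norm_sq_div_four (𝕜 := ℂ) (S x), inner_eq_sum_norm_sq_div_four (𝕜 := ℂ) y]
  simp only [RCLike.I_to_complex]
  rw [← map_add, ← map_sub, h₁, h₂, hS, hS, hS, hS, add_comm x, norm_sub_rev x, hI x y, ← hI y x]

theorem tracial_state_modular_operator_eq_one_general {H : Type*} [NormedAddCommGroup H]
    [InnerProductSpace ℂ H] [CompleteSpace H]
    (A : VonNeumannAlgebra H) (Ψ : H)
    (hcyc : Dense {x : H | ∃ a ∈ A, a Ψ = x})
    (htrace : ∀ a ∈ A, ∀ b ∈ A,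
      (inner ℂ Ψ ((a * b) Ψ) : ℂ) = inner ℂ Ψ ((b * a) Ψ))
    (S : H → H) (hScont : Continuous S)
    (hSadd : ∀ ξ η : H, S (ξ + η) = S ξ + S η)
    (hSsmul : ∀ (c : ℂ) (ξ : H), S (c • ξ) = (starRingEnd ℂ c) • S ξ)
    (hS : ∀ a ∈ A, S (a Ψ) = (star a) Ψ)
    (Δ : H →L[ℂ] H)
    (hΔ : ∀ ξ η : H, (inner ℂ (Δ η) ξ : ℂ) = inner ℂ (S ξ) (S η)) :
    (∀ ξ : H, ‖S ξ‖ = ‖ξ‖) ∧ Δ = 1 := by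
  have hiso_orbit : Set.EqOn (‖S ·‖) (‖·‖) {x : H | ∃ a ∈ A, a Ψ = x} := by
    rintro _ ⟨a, ha, rfl⟩
    simp only [hS a ha]
    exact a.norm_star_apply_eq_of_inner_commute Ψ (htrace a ha _ (star_mem ha))
  have hiso : ∀ ξ : H, ‖S ξ‖ = ‖ξ‖ :=
    congrFun (hScont.norm.ext_on hcyc continuous_norm hiso_orbit)
  let T : H →ₗ⋆[ℂ] H := { toFun := S, map_add' := hSadd, map_smul' := hSsmul }
  refine ⟨hiso, ContinuousLinearMap.ext fun η => ext_inner_right ℂ fun ξ => ?_⟩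
  rw [hΔ]
  exact T.inner_map_map_eq_inner_swap_of_norm_map hiso ξ η

/-- If the vector state of a cyclic and separating vector `Ψ` is tracial on the
von Neumann algebra `𝔄`, then the Tomita operator `S_Ψ` (modelled as the
everywhere-defined continuous antilinear extension of `a Ψ ↦ a† Ψ`) is
antiunitary, and the modular operator `Δ_Ψ` equals the identity. -/
theorem tracial_state_modular_operator_eq_one {H : Type*} [NormedAddCommGroup H]
    [InnerProductSpace ℂ H] [CompleteSpace H]
    (A : VonNeumannAlgebra H) (Ψ : H)
    (hcyc : Dense {x : H | ∃ a ∈ A, a Ψ = x})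
    (hsep : ∀ a ∈ A, a Ψ = 0 → a = 0)
    (htrace : ∀ a ∈ A, ∀ b ∈ A,
      (inner ℂ Ψ ((a * b) Ψ) : ℂ) = inner ℂ Ψ ((b * a) Ψ))
    (S : H → H) (hScont : Continuous S)
    (hSadd : ∀ ξ η : H, S (ξ + η) = S ξ + S η)
    (hSsmul : ∀ (c : ℂ) (ξ : H), S (c • ξ) = (starRingEnd ℂ c) • S ξ)
    (hS : ∀ a ∈ A, S (a Ψ) = (star a) Ψ)
    (Δ : H →L[ℂ] H)
    (hΔ : ∀ ξ η : H, (inner ℂ (Δ η) ξ : ℂ) = inner ℂ (S ξ) (S η)) :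
    (∀ ξ : H, ‖S ξ‖ = ‖ξ‖) ∧ Δ = 1 :=
  tracial_state_modular_operator_eq_one_general A Ψ hcyc htrace S hScont hSadd hSsmul hS Δ hΔ
end

section
/- For a, t, u ∈ ℝ with u such that x¹ ≥ |x⁰| (right wedge condition) and any p ∈ ℝᵈ with ω ≥ |p¹| ≥ 0 (with ω = √(p² + m²)), the quantity ω(sinh(2πa)x⁰ + cosh(2πa)x¹) − p¹(sinh(2πa)x¹ + cosh(2πa)x⁰) is nonnegative. -/
/-- Wedge positivity: for `x = (x⁰, x¹)` in the closed right wedge `x¹ ≥ |x⁰|`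
and `ω ≥ |p¹|`, the boosted combination
`ω(sinh(2πa)x⁰ + cosh(2πa)x¹) - p¹(sinh(2πa)x¹ + cosh(2πa)x⁰)` is nonnegative. -/
theorem wedge_boost_positivity (a x0 x1 ω p1 : ℝ)
    (hx : |x0| ≤ x1) (hp : |p1| ≤ ω) :
    0 ≤ ω * (Real.sinh (2 * Real.pi * a) * x0 + Real.cosh (2 * Real.pi * a) * x1)
      - p1 * (Real.sinh (2 * Real.pi * a) * x1 + Real.cosh (2 * Real.pi * a) * x0) := by
  set θ := 2 * Real.pi * a
  rw [Real.sinh_eq, Real.cosh_eq]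
  rw [abs_le] at hx hp
  have h1 : (0:ℝ) < Real.exp θ := Real.exp_pos _
  have h2 : (0:ℝ) < Real.exp (-θ) := Real.exp_pos _
  nlinarith [mul_nonneg (mul_nonneg h1.le (sub_nonneg.2 hp.2)) (by linarith [hx.1] : (0:ℝ) ≤ x0 + x1),
    mul_nonneg (mul_nonneg h2.le (by linarith [hp.1] : (0:ℝ) ≤ ω + p1)) (by linarith [hx.2] : (0:ℝ) ≤ x1 - x0)]
end

section
/- Let μ be a probability Borel measure on (0,∞) with ∫ λ dμ ≤ 1 and ∫ |log λ| dμ < ∞ and ∫ λ^{1−α}|log λ| dμ < ∞ for α ∈ (0,1). Then for all α ∈ (0,1): (1/(α−1)) log ∫ λ^{1−α} dμ(λ) ≤ −∫ log λ dμ(λ), i.e., the Petz–Rényi relative entropy is bounded above by the relative entropy. -/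
open MeasureTheory

/-- The Petz–Rényi relative entropy is bounded above by the Araki–Uhlmann relative
entropy: `(α-1)⁻¹ log ∫ λ^{1-α} dμ ≤ -∫ log λ dμ` for all `α ∈ (0,1)`. -/
theorem petz_renyi_le_relative_entropy (μ : Measure ℝ) [IsProbabilityMeasure μ]
    (hpos : ∀ᵐ l ∂μ, 0 < l) (hlam : Integrable (fun l => l) μ)
    (hle : ∫ l, l ∂μ ≤ 1)
    (hlog : Integrable (fun l => |Real.log l|) μ)
    (halog : ∀ α ∈ Set.Ioo (0 : ℝ) 1,
      Integrable (fun l => l ^ (1 - α) * |Real.log l|) μ) :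
    ∀ α ∈ Set.Ioo (0 : ℝ) 1,
      (α - 1)⁻¹ * Real.log (∫ l, l ^ (1 - α) ∂μ) ≤ - ∫ l, Real.log l ∂μ := by
  intro α hα
  obtain ⟨hα0, hα1⟩ := hα
  have hlogInt : Integrable (fun l => Real.log l) μ := by
    refine hlog.mono' Real.measurable_log.aestronglyMeasurable ?_
    filter_upwards with l
    simp [Real.norm_eq_abs, abs_abs]
  set m : ℝ := (1 - α) * ∫ l, Real.log l ∂μ with hm
  have h1α : (0:ℝ) < 1 - α := by linarith
  -- integrability of l ^ (1-α)
  have hrInt : Integrable (fun l => l ^ (1 - α)) μ := by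
    have hadd : Integrable (fun l : ℝ => l + 1) μ := hlam.add (integrable_const 1)
    refine hadd.mono'
      ((measurable_id.pow_const _).aestronglyMeasurable) ?_
    filter_upwards [hpos] with l hl
    have hnn : (0:ℝ) ≤ l ^ (1 - α) := Real.rpow_nonneg hl.le _
    rw [Real.norm_eq_abs, abs_of_nonneg hnn]
    rcases le_total l 1 with h | h
    · have : l ^ (1 - α) ≤ 1 := Real.rpow_le_one hl.le h h1α.le
      linarith
    · have h' : l ^ (1 - α) ≤ l ^ (1:ℝ) :=
        Real.rpow_le_rpow_of_exponent_le h (by linarith)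
      rw [Real.rpow_one] at h'
      linarith
  -- tangent line: exp m * ((1-α) log l - m + 1) ≤ l^(1-α)  a.e.
  have hkey : ∫ l, Real.exp m * ((1 - α) * Real.log l - m + 1) ∂μ
      ≤ ∫ l, l ^ (1 - α) ∂μ := by
    refine integral_mono_ae ?_ hrInt ?_
    · exact ((hlogInt.const_mul _).sub (integrable_const m)).add
        (integrable_const 1) |>.const_mul _
    · filter_upwards [hpos] with l hl
      have h1 : (1 - α) * Real.log l - m + 1 ≤ Real.exp ((1 - α) * Real.log l - m) :=
        Real.add_one_le_exp _
      have h2 : Real.exp m * ((1 - α) * Real.log l - m + 1)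
          ≤ Real.exp m * Real.exp ((1 - α) * Real.log l - m) :=
        mul_le_mul_of_nonneg_left h1 (Real.exp_pos m).le
      calc Real.exp m * ((1 - α) * Real.log l - m + 1)
          ≤ Real.exp m * Real.exp ((1 - α) * Real.log l - m) := h2
        _ = Real.exp ((1 - α) * Real.log l) := by rw [← Real.exp_add]; ring_nf
        _ = l ^ (1 - α) := by
            rw [Real.rpow_def_of_pos hl, mul_comm]
  have hlhs : ∫ l, Real.exp m * ((1 - α) * Real.log l - m + 1) ∂μ = Real.exp m := by
    have hsub : Integrable (fun a => (1 - α) * Real.log a - m) μ :=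
      (hlogInt.const_mul _).sub (integrable_const m)
    rw [integral_const_mul, integral_add hsub (integrable_const 1),
      integral_sub (hlogInt.const_mul _) (integrable_const m),
      integral_const_mul, integral_const, integral_const]
    simp [hm]
  have hexp : Real.exp m ≤ ∫ l, l ^ (1 - α) ∂μ := hlhs ▸ hkey
  have hpos' : (0:ℝ) < ∫ l, l ^ (1 - α) ∂μ := lt_of_lt_of_le (Real.exp_pos m) hexp
  have hlogle : m ≤ Real.log (∫ l, l ^ (1 - α) ∂μ) :=
    (Real.le_log_iff_exp_le hpos').2 hexp
  have hneg : (α - 1)⁻¹ < 0 := inv_lt_zero.mpr (by linarith)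
  have := mul_le_mul_of_nonpos_left hlogle hneg.le
  calc (α - 1)⁻¹ * Real.log (∫ l, l ^ (1 - α) ∂μ) ≤ (α - 1)⁻¹ * m := this
    _ = - ∫ l, Real.log l ∂μ := by
        have h2 : (α - 1)⁻¹ * (1 - α) = -1 := by
          rw [inv_mul_eq_div, div_eq_iff (by linarith : α - 1 ≠ 0)]; ring
        rw [hm, ← mul_assoc, h2, neg_one_mul]
end
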